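/- Let k ≥ 1 and l ≥ 1 be integers with l·k < (k+2)². Then the set R^l_k = {v ∈ ℤ^{l+1} : B(v,v) = −2 and B(v, ω') = 0} is finite. -/
import Mathlib


/-- The symmetric bilinear form on `ℤ^{l+1}` with `B(e₀,e₀) = k`, `B(eᵢ,eᵢ) = -1` for
`1 ≤ i ≤ l`, and `B(eᵢ,eⱼ) = 0` for `i ≠ j`. -/
def bformZ (k l : ℕ) (v w : Fin (l + 1) → ℤ) : ℤ :=
  ((k : ℤ) + 1) * (v 0 * w 0) - ∑ i, v i * w i

/-- The vector `ω' = -(k+2)·e₀ + k·(e₁ + ⋯ + e_l)`. -/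
def omegaZ (k l : ℕ) : Fin (l + 1) → ℤ :=
  fun i => if i = 0 then -((k : ℤ) + 2) else (k : ℤ)

/-- The root system `R^l_k = {v ∈ ℤ^{l+1} : B(v,v) = -2, B(v,ω') = 0}`. -/
def rootSet (k l : ℕ) : Set (Fin (l + 1) → ℤ) :=
  {v | bformZ k l v v = -2 ∧ bformZ k l v (omegaZ k l) = 0}

set_option maxHeartbeats 1000000 in
/-- If `l·k < (k+2)²` then the set of roots `R^l_k` is finite. -/
theorem rootSet_finite (k l : ℕ) (hk : 1 ≤ k) (hl : 1 ≤ l)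
    (hdeg : l * k < (k + 2) ^ 2) :
    (rootSet k l).Finite := by
  set M : ℤ := 2 * l * (k + 1) + 2 with hM
  apply Set.Finite.subset
    (Set.Finite.pi (fun i : Fin (l + 1) => Set.finite_Icc (-M) M))
  rintro v ⟨hv1, hv2⟩
  have hkZ : (1 : ℤ) ≤ (k : ℤ) := by exact_mod_cast hk
  have hlZ : (1 : ℤ) ≤ (l : ℤ) := by exact_mod_cast hl
  set S : Finset (Fin (l + 1)) := Finset.univ.erase 0 with hS
  have hcard : (S.card : ℤ) = l := by
    simp [hS, Finset.card_erase_of_mem]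
  have h0mem : (0 : Fin (l + 1)) ∈ (Finset.univ : Finset (Fin (l + 1))) :=
    Finset.mem_univ _
  -- split the quadratic sum
  have hsplit1 : ∑ i, v i * v i = v 0 * v 0 + ∑ i ∈ S, v i * v i :=
    (Finset.add_sum_erase _ _ h0mem).symm
  have hT : ∑ i ∈ S, v i * v i = (k : ℤ) * (v 0 * v 0) + 2 := by
    have := hv1
    unfold bformZ at this
    rw [hsplit1] at this
    linarith
  -- split the orthogonality sum
  have hsplit2 : ∑ i, v i * omegaZ k l i
      = v 0 * omegaZ k l 0 + ∑ i ∈ S, v i * omegaZ k l i :=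
    (Finset.add_sum_erase _ _ h0mem).symm
  have hω : ∑ i ∈ S, v i * omegaZ k l i = (∑ i ∈ S, v i) * (k : ℤ) := by
    rw [Finset.sum_mul]
    apply Finset.sum_congr rfl
    intro i hi
    have : i ≠ 0 := Finset.ne_of_mem_erase hi
    simp [omegaZ, this]
  have hsum : ∑ i ∈ S, v i = -((k : ℤ) + 2) * v 0 := by
    have := hv2
    unfold bformZ at this
    rw [hsplit2, hω] at this
    simp only [omegaZ, if_pos rfl, if_true] at this
    have hk0 : (k : ℤ) ≠ 0 := by linarith
    have : (k : ℤ) * (∑ i ∈ S, v i + ((k : ℤ) + 2) * v 0) = 0 := by linear_combination -this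
    rcases mul_eq_zero.mp this with h | h
    · exact absurd h hk0
    · linarith
  -- Cauchy–Schwarz
  have hCS : (∑ i ∈ S, v i) ^ 2 ≤ (S.card : ℤ) * ∑ i ∈ S, v i ^ 2 :=
    sq_sum_le_card_mul_sum_sq
  have hsq : ∑ i ∈ S, v i ^ 2 = ∑ i ∈ S, v i * v i := by
    apply Finset.sum_congr rfl; intro i _; ring
  rw [hsq, hT, hcard, hsum] at hCS
  have hdegZ : (l : ℤ) * k < ((k : ℤ) + 2) ^ 2 := by exact_mod_cast hdeg
  have hv0 : v 0 * v 0 ≤ 2 * l := by nlinarith [sq_nonneg (v 0)]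
  -- each coordinate squared is bounded by M
  have hbound : ∀ i, v i * v i ≤ M := by
    intro i
    rcases eq_or_ne i 0 with rfl | hi
    · nlinarith
    · have hiS : i ∈ S := Finset.mem_erase.mpr ⟨hi, Finset.mem_univ _⟩
      have hle : v i * v i ≤ ∑ j ∈ S, v j * v j := by
        apply Finset.single_le_sum (fun j _ => mul_self_nonneg (v j)) hiS
      nlinarith
  intro i _
  have h := hbound i
  have hM2 : (2 : ℤ) ≤ M := by nlinarith
  constructor <;> nlinarith [h, hM2]
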